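/- Let A be a torsion-free abelian group and x an automorphism of A of finite order r such that for every a ∈ A there exists s with [a,_s x] = 1. Then x is the identity automorphism. (Combination of Casolo's lemma with torsion-freeness.) -/

import Mathlib

/-!
If `x` has order `r` and fixes `c = [a, x]`, then `x ^ k a = a * c ^ k` for all `k`, so
`c ^ r = 1` and torsion-freeness gives `c = 1`, i.e. `x` fixes `a`. Since
`[a,_(s+1) x] = [[a, x],_s x]`, induction on `s` shows that `[a,_s x] = 1` forces `x a = a`.
-/

/-- Iterated commutator `[a,_n x]` of an element `a` of an abelian group with an
automorphism `x`, where `[a, x] = a⁻¹ * x a`. -/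
def autEngel {A : Type*} [CommGroup A] (x : MulAut A) (a : A) : ℕ → A
  | 0 => a
  | n + 1 => (autEngel x a n)⁻¹ * x (autEngel x a n)

lemma autEngel_succ' {A : Type*} [CommGroup A] (x : MulAut A) (a : A) (n : ℕ) :
    autEngel x a (n + 1) = autEngel x (a⁻¹ * x a) n := by
  induction n with
  | zero => rfl
  | succ n ih =>
    show (autEngel x a (n + 1))⁻¹ * x (autEngel x a (n + 1)) = _
    rw [ih]
    rfl

lemma MulAut.pow_apply_eq_mul_pow_of_apply_commutator {A : Type*} [Group A] (x : MulAut A)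
    (a : A) (hc : x (a⁻¹ * x a) = a⁻¹ * x a) (k : ℕ) :
    (x ^ k) a = a * (a⁻¹ * x a) ^ k := by
  induction k with
  | zero => simp
  | succ k ih =>
    rw [pow_succ', MulAut.mul_apply, ih, map_mul, map_pow, hc, pow_succ', ← mul_assoc,
      mul_inv_cancel_left]

lemma MulAut.commutator_pow_eq_one {A : Type*} [Group A] (x : MulAut A) {r : ℕ}
    (hx : x ^ r = 1) (a : A) (hc : x (a⁻¹ * x a) = a⁻¹ * x a) :
    (a⁻¹ * x a) ^ r = 1 := by
  have h := x.pow_apply_eq_mul_pow_of_apply_commutator a hc r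
  rwa [hx, MulAut.one_apply, left_eq_mul] at h

lemma MulAut.apply_eq_self_of_autEngel_eq_one {A : Type*} [CommGroup A]
    (htf : ∀ a : A, ∀ n : ℕ, 0 < n → a ^ n = 1 → a = 1)
    (x : MulAut A) {r : ℕ} (hx : x ^ r = 1) (hr : 0 < r) (s : ℕ) :
    ∀ a : A, autEngel x a s = 1 → x a = a := by
  induction s with
  | zero =>
    rintro a rfl
    exact map_one x
  | succ s ih =>
    intro a ha
    rw [autEngel_succ'] at ha
    have hc : x (a⁻¹ * x a) = a⁻¹ * x a := ih _ ha
    have hc_one : a⁻¹ * x a = 1 := htf _ r hr (x.commutator_pow_eq_one hx a hc)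
    exact (inv_mul_eq_one.mp hc_one).symm

/-- If `A` is torsion-free abelian and `x` is an automorphism of finite order `r` such
that every element of `A` is annihilated by some iterated commutator with `x`, then `x`
is the identity automorphism. -/
theorem stmt19 {A : Type*} [CommGroup A]
    (htf : ∀ a : A, ∀ n : ℕ, 0 < n → a ^ n = 1 → a = 1)
    (x : MulAut A) (r : ℕ) (hr : orderOf x = r) (hrpos : 0 < r)
    (hengel : ∀ a : A, ∃ s : ℕ, 1 ≤ s ∧ autEngel x a s = 1) :
    ∀ a : A, x a = a := by
  have hx : x ^ r = 1 := hr ▸ pow_orderOf_eq_one x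
  intro a
  obtain ⟨s, -, hs⟩ := hengel a
  exact x.apply_eq_self_of_autEngel_eq_one htf hx hrpos s a hs
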